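/- For every real g ∈ (0, 1/4), there exists a continuous linear operator K on the Hilbert space ℓ²(ℕ, ℝ) of square-summable real sequences such that ⟨e_r, K e_s⟩ = (r+1)·C(r+s+1, r+1)·(√g)^{r+s+2} for all r, s ∈ ℕ (where (e_n) is the standard orthonormal basis), and the operator norm of K satisfies ‖K‖ ≤ g/(1−4g)^{3/2}. -/

import Mathlib

/-!
The matrix is Hilbert–Schmidt, so the operator it defines has norm at most the ℓ² norm of its
entries. Along the antidiagonal `r + s = n` the squared entries sum, by Vandermonde's identity,
to `(n + 1)² C(2n, n) gⁿ⁺²`; since `2 C(2n, n) ≤ 4ⁿ` for `n ≥ 1` this is at most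
`g² C(n + 2, 2) (4g)ⁿ`, and the negative binomial series sums these bounds to `g² / (1 - 4g)³`.
-/

open Finset Nat

section Antidiagonal

variable {A : Type*} [AddMonoid A] [HasAntidiagonal A]

theorem hasSum_prod_of_nonneg_of_hasSum_antidiagonal {F : A × A → ℝ} (hF : 0 ≤ F) {a : ℝ}
    (h : HasSum (fun n => ∑ p ∈ antidiagonal n, F p) a) : HasSum F a := by
  let e := HasAntidiagonal.sigmaAntidiagonalEquivProd (A := A)
  have hfiber (n : A) : HasSum (fun p : antidiagonal n => F p) (∑ p ∈ antidiagonal n, F p) :=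
    (antidiagonal n).hasSum F
  have hsigma : Summable (F ∘ e) :=
    (summable_sigma_of_nonneg fun x => hF _).2
      ⟨fun n => (hfiber n).summable, h.summable.congr fun n => (hfiber n).tsum_eq.symm⟩
  rw [← e.hasSum_iff, h.unique (hsigma.hasSum.sigma hfiber)]
  exact hsigma.hasSum

end Antidiagonal

section HilbertSchmidt

variable {ι κ : Type*}

theorem memℓp_two_iff_summable_sq {f : ι → ℝ} : Memℓp f 2 ↔ Summable fun i => f i ^ 2 := by
  rw [memℓp_gen_iff (by norm_num)]
  norm_num [Real.norm_eq_abs, sq_abs]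

theorem lp.norm_sq_eq_tsum_sq (f : lp (fun _ : ι => ℝ) 2) : ‖f‖ ^ 2 = ∑' i, f i ^ 2 := by
  rw [← real_inner_self_eq_norm_sq, lp.inner_eq_tsum]
  simp [sq]

variable {M : ι → κ → ℝ} (hM : Summable fun p : ι × κ => M p.1 p.2 ^ 2)
noncomputable def hilbertSchmidtRow (r : ι) : lp (fun _ : κ => ℝ) 2 :=
  ⟨M r, memℓp_two_iff_summable_sq.2 (hM.prod_factor r)⟩

theorem inner_hilbertSchmidtRow_sq_le (r : ι) (f : lp (fun _ : κ => ℝ) 2) :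
    inner ℝ (hilbertSchmidtRow hM r) f ^ 2 ≤ (∑' s, M r s ^ 2) * ‖f‖ ^ 2 := by
  calc inner ℝ (hilbertSchmidtRow hM r) f ^ 2
      = |inner ℝ (hilbertSchmidtRow hM r) f| ^ 2 := (sq_abs _).symm
    _ ≤ (‖hilbertSchmidtRow hM r‖ * ‖f‖) ^ 2 := by gcongr; exact abs_real_inner_le_norm _ _
    _ = (∑' s, M r s ^ 2) * ‖f‖ ^ 2 := by rw [mul_pow, lp.norm_sq_eq_tsum_sq]; rfl

theorem summable_inner_hilbertSchmidtRow_sq (f : lp (fun _ : κ => ℝ) 2) :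
    Summable fun r => inner ℝ (hilbertSchmidtRow hM r) f ^ 2 :=
  hM.prod.mul_right (‖f‖ ^ 2) |>.of_nonneg_of_le (fun _ => sq_nonneg _)
    (inner_hilbertSchmidtRow_sq_le hM · f)

noncomputable def hilbertSchmidtLinearMap : lp (fun _ : κ => ℝ) 2 →ₗ[ℝ] lp (fun _ : ι => ℝ) 2 where
  toFun f := ⟨fun r => inner ℝ (hilbertSchmidtRow hM r) f,
    memℓp_two_iff_summable_sq.2 (summable_inner_hilbertSchmidtRow_sq hM f)⟩
  map_add' _ _ := lp.ext <| funext fun _ => inner_add_right _ _ _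
  map_smul' _ _ := lp.ext <| funext fun _ => real_inner_smul_right _ _ _

theorem norm_hilbertSchmidtLinearMap_apply_le (f : lp (fun _ : κ => ℝ) 2) :
    ‖hilbertSchmidtLinearMap hM f‖ ≤ √(∑' p : ι × κ, M p.1 p.2 ^ 2) * ‖f‖ := by
  refine le_of_pow_le_pow_left₀ two_ne_zero (by positivity) ?_
  calc ‖hilbertSchmidtLinearMap hM f‖ ^ 2
      = ∑' r, inner ℝ (hilbertSchmidtRow hM r) f ^ 2 := lp.norm_sq_eq_tsum_sq _
    _ ≤ ∑' r, (∑' s, M r s ^ 2) * ‖f‖ ^ 2 :=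
      (summable_inner_hilbertSchmidtRow_sq hM f).tsum_le_tsum
        (inner_hilbertSchmidtRow_sq_le hM · f) (hM.prod.mul_right _)
    _ = (√(∑' p : ι × κ, M p.1 p.2 ^ 2) * ‖f‖) ^ 2 := by
      rw [tsum_mul_right, mul_pow, Real.sq_sqrt (tsum_nonneg fun _ => sq_nonneg _), hM.tsum_prod]

noncomputable def hilbertSchmidtCLM : lp (fun _ : κ => ℝ) 2 →L[ℝ] lp (fun _ : ι => ℝ) 2 :=
  (hilbertSchmidtLinearMap hM).mkContinuous _ (norm_hilbertSchmidtLinearMap_apply_le hM)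

theorem norm_hilbertSchmidtCLM_le : ‖hilbertSchmidtCLM hM‖ ≤ √(∑' p : ι × κ, M p.1 p.2 ^ 2) :=
  LinearMap.mkContinuous_norm_le _ (Real.sqrt_nonneg _) _

theorem inner_single_hilbertSchmidtCLM_single [DecidableEq ι] [DecidableEq κ] (r : ι) (s : κ) :
    inner ℝ (lp.single 2 r (1 : ℝ)) (hilbertSchmidtCLM hM (lp.single 2 s 1)) = M r s := by
  simp [hilbertSchmidtCLM, hilbertSchmidtLinearMap, hilbertSchmidtRow, lp.inner_single_left,
    lp.inner_single_right]

end HilbertSchmidt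

theorem sum_antidiagonal_sq_succ_mul_choose (n : ℕ) :
    ∑ p ∈ antidiagonal n, ((p.1 + 1) * (n + 1).choose (p.1 + 1)) ^ 2
      = (n + 1) ^ 2 * centralBinom n := by
  rw [centralBinom_eq_two_mul_choose, ← sum_range_choose_sq, mul_sum,
    sum_antidiagonal_eq_sum_range_succ_mk]
  refine sum_congr rfl fun k _ => ?_
  rw [mul_comm (k + 1), ← add_one_mul_choose_eq, mul_pow]

theorem two_mul_centralBinom_le_four_pow {n : ℕ} (hn : n ≠ 0) : 2 * centralBinom n ≤ 4 ^ n := by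
  obtain ⟨m, rfl⟩ := exists_eq_succ_of_ne_zero hn
  have hsplit : centralBinom (m + 1) = 2 * (2 * m + 1).choose m := by
    rw [centralBinom_eq_two_mul_choose, show 2 * (m + 1) = 2 * m + 1 + 1 by ring,
      choose_succ_succ, choose_symm_half]
    ring
  rw [hsplit, pow_succ]
  linarith [choose_middle_le_pow m]

theorem sq_succ_mul_centralBinom_le (n : ℕ) :
    (n + 1) ^ 2 * centralBinom n ≤ (n + 2).choose 2 * 4 ^ n := by
  rcases eq_or_ne n 0 with rfl | hn
  · decide
  have hchoose : (n + 2).choose 2 * 2 = (n + 2) * (n + 1) := by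
    simpa [mul_comm] using (add_one_mul_choose_eq (n + 1) 1).symm
  refine Nat.le_of_mul_le_mul_right (c := 2) ?_ two_pos
  calc (n + 1) ^ 2 * centralBinom n * 2 = (n + 1) ^ 2 * (2 * centralBinom n) := by ring
    _ ≤ (n + 2) * (n + 1) * 4 ^ n :=
      Nat.mul_le_mul (by nlinarith) (two_mul_centralBinom_le_four_pow hn)
    _ = (n + 2).choose 2 * 4 ^ n * 2 := by rw [mul_right_comm _ (4 ^ n), hchoose]

-- The paper's `K_{r,s}(g)`, shifted to 0-based indices.
noncomputable def kMatrix (g : ℝ) (r s : ℕ) : ℝ :=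
  ((r : ℝ) + 1) * ((r + s + 1).choose (r + 1) : ℝ) * √g ^ (r + s + 2)

section KMatrix

variable {g : ℝ}

theorem sum_antidiagonal_kMatrix_sq (hg : 0 ≤ g) (n : ℕ) :
    ∑ p ∈ antidiagonal n, kMatrix g p.1 p.2 ^ 2
      = ((n + 1) ^ 2 * centralBinom n : ℕ) * g ^ (n + 2) := by
  rw [← sum_antidiagonal_sq_succ_mul_choose, Nat.cast_sum, sum_mul]
  refine sum_congr rfl fun p hp => ?_
  rw [HasAntidiagonal.mem_antidiagonal] at hp
  rw [kMatrix, hp, mul_pow, ← pow_mul, mul_comm _ 2, pow_mul, Real.sq_sqrt hg]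
  push_cast
  rfl

theorem sum_antidiagonal_kMatrix_sq_le (hg : 0 ≤ g) (n : ℕ) :
    ∑ p ∈ antidiagonal n, kMatrix g p.1 p.2 ^ 2 ≤ g ^ 2 * ((n + 2).choose 2 * (4 * g) ^ n) := by
  rw [sum_antidiagonal_kMatrix_sq hg]
  calc ((n + 1) ^ 2 * centralBinom n : ℕ) * g ^ (n + 2)
      ≤ ((n + 2).choose 2 * 4 ^ n : ℕ) * g ^ (n + 2) := by
        refine mul_le_mul_of_nonneg_right ?_ (by positivity)
        exact_mod_cast sq_succ_mul_centralBinom_le n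
    _ = g ^ 2 * ((n + 2).choose 2 * (4 * g) ^ n) := by push_cast; ring

theorem summable_sum_antidiagonal_kMatrix_sq (hg0 : 0 ≤ g) (hg1 : g < 1 / 4) :
    Summable fun n => ∑ p ∈ antidiagonal n, kMatrix g p.1 p.2 ^ 2 := by
  have h4g : ‖4 * g‖ < 1 := by rw [Real.norm_of_nonneg (by positivity)]; linarith
  exact ((summable_choose_mul_geometric_of_norm_lt_one 2 h4g).mul_left (g ^ 2)).of_nonneg_of_le
    (fun n => sum_nonneg fun _ _ => sq_nonneg _) (sum_antidiagonal_kMatrix_sq_le hg0)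

theorem hasSum_kMatrix_sq (hg0 : 0 ≤ g) (hg1 : g < 1 / 4) :
    HasSum (fun p : ℕ × ℕ => kMatrix g p.1 p.2 ^ 2)
      (∑' n, ∑ p ∈ antidiagonal n, kMatrix g p.1 p.2 ^ 2) :=
  hasSum_prod_of_nonneg_of_hasSum_antidiagonal (fun _ => sq_nonneg _)
    (summable_sum_antidiagonal_kMatrix_sq hg0 hg1).hasSum

theorem tsum_kMatrix_sq_le (hg0 : 0 ≤ g) (hg1 : g < 1 / 4) :
    ∑' p : ℕ × ℕ, kMatrix g p.1 p.2 ^ 2 ≤ g ^ 2 / (1 - 4 * g) ^ 3 := by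
  have h4g : ‖4 * g‖ < 1 := by rw [Real.norm_of_nonneg (by positivity)]; linarith
  rw [(hasSum_kMatrix_sq hg0 hg1).tsum_eq]
  calc ∑' n, ∑ p ∈ antidiagonal n, kMatrix g p.1 p.2 ^ 2
      ≤ ∑' n : ℕ, g ^ 2 * ((n + 2).choose 2 * (4 * g) ^ n) :=
        (summable_sum_antidiagonal_kMatrix_sq hg0 hg1).tsum_le_tsum
          (sum_antidiagonal_kMatrix_sq_le hg0)
          ((summable_choose_mul_geometric_of_norm_lt_one 2 h4g).mul_left _)
    _ = g ^ 2 / (1 - 4 * g) ^ 3 := by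
      rw [tsum_mul_left, tsum_choose_mul_geometric_of_norm_lt_one 2 h4g, mul_one_div]

end KMatrix

theorem stmt_15 (g : ℝ) (hg0 : 0 < g) (hg1 : g < 1/4) :
    ∃ K : lp (fun _ : ℕ => ℝ) 2 →L[ℝ] lp (fun _ : ℕ => ℝ) 2,
      (∀ r s : ℕ,
        (inner ℝ (lp.single 2 r (1 : ℝ)) (K (lp.single 2 s (1 : ℝ))) : ℝ)
          = ((r : ℝ) + 1) * (Nat.choose (r + s + 1) (r + 1) : ℝ)
              * Real.sqrt g ^ (r + s + 2)) ∧
      ‖K‖ ≤ g / (1 - 4 * g) ^ ((3 : ℝ) / 2) := by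
  have hM := (hasSum_kMatrix_sq hg0.le hg1).summable
  have hbound_sq : (g / (1 - 4 * g) ^ ((3 : ℝ) / 2)) ^ 2 = g ^ 2 / (1 - 4 * g) ^ 3 := by
    rw [div_pow, ← Real.rpow_natCast ((1 - 4 * g) ^ ((3 : ℝ) / 2)) 2,
      ← Real.rpow_mul (by linarith)]
    norm_num
  refine ⟨hilbertSchmidtCLM hM, inner_single_hilbertSchmidtCLM_single hM,
    (norm_hilbertSchmidtCLM_le hM).trans (Real.sqrt_le_iff.2 ⟨?_, ?_⟩)⟩
  · exact div_nonneg hg0.le (Real.rpow_nonneg (by linarith) _)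
  · exact (tsum_kMatrix_sq_le hg0.le hg1).trans_eq hbound_sq.symm
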